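/- arXiv:2008.01612 — 2 statements merged into one kernel-verified Lean document; each statement's English description precedes it below -/
import Mathlib

section
/- Suppose vectors b ∈ ℝˢ and c ∈ ℝˢ, with strictly lower triangular α ∈ ℝ^{s×s} and c = α·𝟙, satisfy bᵀ𝟙 = 1, bᵀc = 1/2, bᵀ(c ∘ c) = 1/3, and bᵀαc = 1/6 (∘ denoting the entrywise product). If additionally a lower triangular matrix γ ∈ ℝ^{s×s} with g = γ𝟙 satisfies bᵀg = 0, bᵀγc = 0, bᵀαg = 0, and bᵀγg = 0, then the matrix β = α + γ and e = c + g satisfy the Rosenbrock order-3 conditions bᵀe = 1/2 and bᵀβe = 1/6. -/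
open Matrix

/-- The GARK-ROW (W-method) order-3 conditions on `(b, α, γ)` imply the
GARK-ROS (exact-Jacobian Rosenbrock) order-3 conditions on `(b, β = α + γ)`. -/
theorem row_order3_implies_ros_order3 {s : ℕ}
    (b c g e : Fin s → ℝ) (α γ β : Matrix (Fin s) (Fin s) ℝ)
    (hα : ∀ i j : Fin s, i ≤ j → α i j = 0)
    (hγ : ∀ i j : Fin s, i < j → γ i j = 0)
    (hc : c = α *ᵥ 1) (hg : g = γ *ᵥ 1)
    (hβ : β = α + γ) (he : e = c + g)
    (h1 : b ⬝ᵥ 1 = 1) (h2 : b ⬝ᵥ c = 1 / 2)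
    (h3 : b ⬝ᵥ (c * c) = 1 / 3) (h4 : b ⬝ᵥ (α *ᵥ c) = 1 / 6)
    (w1 : b ⬝ᵥ g = 0) (w2 : b ⬝ᵥ (γ *ᵥ c) = 0)
    (w3 : b ⬝ᵥ (α *ᵥ g) = 0) (w4 : b ⬝ᵥ (γ *ᵥ g) = 0) :
    b ⬝ᵥ e = 1 / 2 ∧ b ⬝ᵥ (β *ᵥ e) = 1 / 6 := by
  subst hβ he
  constructor
  · rw [dotProduct_add, h2, w1]; ring
  · rw [add_mulVec, mulVec_add, mulVec_add, dotProduct_add, dotProduct_add,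
      dotProduct_add, h4, w2, w3, w4]
    ring
end

section
/- Suppose b, c, g, e ∈ ℝˢ with e = c + g, and strictly lower triangular α, lower triangular γ with β = α + γ, c = α𝟙, g = γ𝟙. If bᵀ𝟙 = 1, bᵀe = 1/2, bᵀ(c∘c) = 1/3, and bᵀβe = 1/6, then the scalar polynomial R(z) = 1 + bᵀz(I - zβ)⁻¹𝟙 agrees with exp(z) up to O(z⁴): R(z) = 1 + z + z²/2 + z³/6 + O(z⁴) as z → 0. -/
/-!
Truncating the Neumann series gives
`(1 - zβ)⁻¹ = ∑_{k<n} z^k β^k + z^n β^n (1 - zβ)⁻¹` wherever `det (1 - zβ) ≠ 0`, which holds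
near `z = 0`, and the last factor is continuous at `0`. Hence the coefficient of `z^(k+1)` in
`R(z)` is `bᵀβ^k𝟙`; for `k = 0, 1, 2` it is `1`, `bᵀe = 1/2` and `bᵀβe = 1/6`, since `β𝟙 = e`.
-/

open Matrix Asymptotics Filter Finset Topology

namespace Matrix

variable {ι : Type*} [Fintype ι] [DecidableEq ι]

theorem inv_one_sub_eq_geom_sum_add {R : Type*} [CommRing R] (M : Matrix ι ι R)
    (hM : IsUnit (1 - M).det) (n : ℕ) :
    (1 - M)⁻¹ = ∑ k ∈ range n, M ^ k + M ^ n * (1 - M)⁻¹ := by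
  have h := congrArg (· * (1 - M)⁻¹) (geom_sum_mul_neg M n)
  simp only [mul_assoc, mul_nonsing_inv _ hM, mul_one, sub_mul, one_mul] at h
  rw [h, sub_add_cancel]

variable {𝕜 : Type*} [NormedField 𝕜]

theorem eventually_isUnit_det_one_sub_smul (A : Matrix ι ι 𝕜) :
    ∀ᶠ z in 𝓝 (0 : 𝕜), IsUnit (1 - z • A).det := by
  have hdet : ContinuousAt (fun z : 𝕜 => (1 - z • A).det) 0 := by fun_prop
  have hdet0 : (1 - (0 : 𝕜) • A).det ≠ 0 := by simp
  filter_upwards [hdet.eventually_ne hdet0] with z hz using hz.isUnit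

theorem continuousAt_inv_one_sub_smul (A : Matrix ι ι 𝕜) :
    ContinuousAt (fun z : 𝕜 => (1 - z • A)⁻¹) 0 := by
  refine ContinuousAt.comp (g := Inv.inv) ?_ (by fun_prop)
  refine continuousAt_matrix_inv _ ?_
  simpa using NormedRing.inverse_continuousAt (1 : 𝕜ˣ)

theorem dotProduct_inv_one_sub_smul_mulVec_sub_sum_isBigO (A : Matrix ι ι 𝕜) (b v : ι → 𝕜)
    (n : ℕ) :
    (fun z : 𝕜 => b ⬝ᵥ ((1 - z • A)⁻¹ *ᵥ v) - ∑ k ∈ range n, z ^ k * (b ⬝ᵥ (A ^ k *ᵥ v)))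
      =O[𝓝 0] fun z => z ^ n := by
  set r : 𝕜 → 𝕜 := fun z => b ⬝ᵥ ((A ^ n * (1 - z • A)⁻¹) *ᵥ v)
  have hr : ContinuousAt r 0 := by
    have : Continuous fun N : Matrix ι ι 𝕜 => b ⬝ᵥ ((A ^ n * N) *ᵥ v) := by fun_prop
    exact this.continuousAt.comp (continuousAt_inv_one_sub_smul A)
  have hexp : ∀ᶠ z in 𝓝 (0 : 𝕜),
      b ⬝ᵥ ((1 - z • A)⁻¹ *ᵥ v) - ∑ k ∈ range n, z ^ k * (b ⬝ᵥ (A ^ k *ᵥ v)) = z ^ n * r z := by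
    filter_upwards [eventually_isUnit_det_one_sub_smul A] with z hz
    rw [inv_one_sub_eq_geom_sum_add _ hz n]
    simp [r, add_mulVec, sum_mulVec, dotProduct_sum, smul_pow, smul_mulVec]
  refine EventuallyEq.trans_isBigO hexp ?_
  simpa using (isBigO_refl (fun z : 𝕜 => z ^ n) _).mul (hr.tendsto.isBigO_one 𝕜)

end Matrix

theorem order3_stability_expansion_general {s : ℕ}
    (b c g e : Fin s → ℝ) (α γ β : Matrix (Fin s) (Fin s) ℝ)
    (hβ : β = α + γ) (hc : c = α *ᵥ 1) (hg : g = γ *ᵥ 1) (he : e = c + g)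
    (h1 : b ⬝ᵥ 1 = 1) (h2 : b ⬝ᵥ e = 1 / 2) (h4 : b ⬝ᵥ (β *ᵥ e) = 1 / 6) :
    (fun z : ℝ => (1 + z * (b ⬝ᵥ ((1 - z • β)⁻¹ *ᵥ 1))) -
        (1 + z + z ^ 2 / 2 + z ^ 3 / 6)) =O[nhds 0] (fun z : ℝ => z ^ 4) := by
  have hβe : β *ᵥ 1 = e := by rw [hβ, add_mulVec, ← hc, ← hg, he]
  have hβ2 : β ^ 2 *ᵥ 1 = β *ᵥ e := by rw [sq, ← mulVec_mulVec, hβe]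
  have hR := (isBigO_refl (fun z : ℝ => z) _).mul
    (dotProduct_inv_one_sub_smul_mulVec_sub_sum_isBigO β b 1 3)
  simp only [sum_range_succ, sum_range_zero, pow_zero, pow_one, one_mulVec, hβe, hβ2, h1, h2,
    h4] at hR
  exact hR.congr (fun z => by ring) (fun z => by ring)

/-- The Rosenbrock order-3 conditions imply third-order accuracy of the linear
stability function: `R(z) = 1 + bᵀz(I - zβ)⁻¹𝟙 = 1 + z + z²/2 + z³/6 + O(z⁴)`
as `z → 0`. -/
theorem order3_stability_expansion {s : ℕ}
    (b c g e : Fin s → ℝ) (α γ β : Matrix (Fin s) (Fin s) ℝ)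
    (hα : ∀ i j : Fin s, i ≤ j → α i j = 0)
    (hγ : ∀ i j : Fin s, i < j → γ i j = 0)
    (hβ : β = α + γ) (hc : c = α *ᵥ 1) (hg : g = γ *ᵥ 1) (he : e = c + g)
    (h1 : b ⬝ᵥ 1 = 1) (h2 : b ⬝ᵥ e = 1 / 2)
    (h3 : b ⬝ᵥ (c * c) = 1 / 3) (h4 : b ⬝ᵥ (β *ᵥ e) = 1 / 6) :
    (fun z : ℝ => (1 + z * (b ⬝ᵥ ((1 - z • β)⁻¹ *ᵥ 1))) -
        (1 + z + z ^ 2 / 2 + z ^ 3 / 6)) =O[nhds 0] (fun z : ℝ => z ^ 4) :=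
  order3_stability_expansion_general b c g e α γ β hβ hc hg he h1 h2 h4
end
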